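/- Let G > 0 and let f : 𝔽₂ⁿ → ℝ be a function of Fourier degree at most d that is G-granular, i.e., for every x ∈ 𝔽₂ⁿ the value f(x) is an integer multiple of G. Then for every γ ∈ 𝔽₂ⁿ, the Fourier coefficient f̂(γ) is an integer multiple of 2^{−d} · G. -/

import Mathlib

open Finset

abbrev F2 (n : ℕ) := Fin n → ZMod 2

/-- The 𝔽₂ bilinear form ⟨γ,x⟩ = Σᵢ γᵢ xᵢ. -/
def ip {n : ℕ} (γ x : F2 n) : ZMod 2 := ∑ i, γ i * x i

/-- The character χ_γ(x) = (-1)^⟨γ,x⟩. -/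
noncomputable def chi {n : ℕ} (γ x : F2 n) : ℝ := (-1 : ℝ) ^ (ip γ x).val

/-- Fourier coefficient f̂(γ) = 2^{-n} Σ_x f(x) (-1)^⟨γ,x⟩. -/
noncomputable def fCoeff {n : ℕ} (f : F2 n → ℝ) (γ : F2 n) : ℝ :=
  (∑ x : F2 n, f x * chi γ x) / 2 ^ n

/-- f has Fourier degree at most d. -/
def HasFourierDegLE {n : ℕ} (f : F2 n → ℝ) (d : ℕ) : Prop :=
  ∀ γ : F2 n, d < hammingNorm γ → fCoeff f γ = 0

/-- Orthogonal subspace 𝒱^⊥. -/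
def perp {n : ℕ} (V : Submodule (ZMod 2) (F2 n)) : Submodule (ZMod 2) (F2 n) where
  carrier := {γ | ∀ v ∈ V, ip γ v = 0}
  zero_mem' := by
    intro v _
    simp [ip]
  add_mem' := by
    intro a b ha hb v hv
    have h : ip (a + b) v = ip a v + ip b v := by
      simp [ip, add_mul, Finset.sum_add_distrib]
    simp only [Set.mem_setOf_eq] at ha hb ⊢
    rw [h, ha v hv, hb v hv, add_zero]
  smul_mem' := by
    intro c a ha v hv
    have h : ip (c • a) v = c * ip a v := by
      simp [ip, Finset.mul_sum, mul_assoc]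
    simp only [Set.mem_setOf_eq] at ha ⊢
    rw [h, ha v hv, mul_zero]

/-- Fourier coefficient of the restriction of f to the affine subspace α + 𝒱,
indexed by γ (from a complement 𝒲 of 𝒱^⊥):
f̂_𝒰(γ) = |𝒱|⁻¹ Σ_{x ∈ 𝒱} f(x+α)(-1)^⟨γ,x⟩. -/
noncomputable def restrictCoeff {n : ℕ} (f : F2 n → ℝ) (V : Submodule (ZMod 2) (F2 n))
    (α γ : F2 n) : ℝ :=
  (∑ x : F2 n, Set.indicator (V : Set (F2 n)) (fun x => f (x + α) * chi γ x) x) / (Nat.card V)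

/-- The restriction of f to α + 𝒱 is δ-regular. -/
def IsDeltaRegular {n : ℕ} (f : F2 n → ℝ) (V : Submodule (ZMod 2) (F2 n)) (α : F2 n)
    (δ : ℝ) : Prop :=
  ∀ W : Submodule (ZMod 2) (F2 n), IsCompl W (perp V) →
    ∀ γ ∈ W, γ ≠ 0 → |restrictCoeff f V α γ| ≤ δ

/-- span of the standard basis vectors indexed by J. -/
def spanJ {n : ℕ} (J : Finset (Fin n)) : Submodule (ZMod 2) (F2 n) where
  carrier := {x | ∀ i ∉ J, x i = 0}
  zero_mem' := by intro i _; rfl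
  add_mem' := by
    intro a b ha hb i hi
    simp only [Set.mem_setOf_eq] at ha hb ⊢
    simp [Pi.add_apply, ha i hi, hb i hi]
  smul_mem' := by
    intro c a ha i hi
    simp only [Set.mem_setOf_eq] at ha ⊢
    simp [Pi.smul_apply, ha i hi]

/-! Induct on a set `S` of coordinates such that `f x` depends only on `(xᵢ)_{i ∈ S}`. For `i ∈ S`
and `β` with `β i = 0`, the restriction `x ↦ f (x with xᵢ := 0)` is `G`-granular of degree `≤ d`,
depends only on `S \ {i}`, and has coefficient `f̂(β) + f̂(β + eᵢ)` at `β`; the discrete derivative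
`x ↦ (f (x with xᵢ := 0) - f (x with xᵢ := 1)) / 2` is `G/2`-granular of degree `≤ d - 1`, depends
only on `S \ {i}`, and has coefficient `f̂(β + eᵢ)` at `β`. Induction puts both coefficients in
`(G / 2^d) ℤ` (for `d = 0` the second one vanishes by the degree bound), hence also `f̂(β)`. When
`S = ∅` the function is a constant in `G ℤ`, and its only nonzero coefficient is that constant. -/

open Function

section Characters

variable {n : ℕ}

lemma neg_one_pow_val_add (a b : ZMod 2) :
    (-1 : ℝ) ^ (a + b).val = (-1) ^ a.val * (-1) ^ b.val := by
  rw [ZMod.val_add, ← pow_add, ← neg_one_pow_eq_pow_mod_two]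

lemma chi_add_left (γ δ x : F2 n) : chi (γ + δ) x = chi γ x * chi δ x := by
  rw [chi, chi, chi, ← neg_one_pow_val_add]
  exact congrArg (fun a : ZMod 2 => (-1 : ℝ) ^ a.val) (add_dotProduct γ δ x)

lemma chi_add_right (γ x y : F2 n) : chi γ (x + y) = chi γ x * chi γ y := by
  rw [chi, chi, chi, ← neg_one_pow_val_add]
  exact congrArg (fun a : ZMod 2 => (-1 : ℝ) ^ a.val) (dotProduct_add γ x y)

lemma chi_single_left (i : Fin n) (x : F2 n) : chi (Pi.single i 1) x = (-1) ^ (x i).val := by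
  simp [chi, ip, Pi.single_apply, ite_mul]

lemma chi_single_right_of_ne_zero {γ : F2 n} {i : Fin n} (hγ : γ i ≠ 0) :
    chi γ (Pi.single i 1) = -1 := by
  have hγ1 : γ i = 1 := (by decide : ∀ a : ZMod 2, a ≠ 0 → a = 1) _ hγ
  simp [chi, ip, Pi.single_apply, hγ1, ZMod.val_one]

lemma chi_update_of_apply_eq_zero {β : F2 n} {i : Fin n} (hβ : β i = 0) (x : F2 n)
    (c : ZMod 2) : chi β (update x i c) = chi β x := by
  unfold chi ip
  congr 2
  refine sum_congr rfl fun j _ => ?_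
  rcases eq_or_ne j i with rfl | hj
  · simp [hβ]
  · rw [update_of_ne hj]

end Characters

section FourierSums

variable {n : ℕ}

lemma add_single_one_eq_update (x : F2 n) (i : Fin n) :
    x + Pi.single i 1 = update x i (x i + 1) := by
  ext j
  rcases eq_or_ne j i with rfl | hj
  · simp
  · simp [hj]

lemma sum_update_zero_add_sum_update_one (F : F2 n → ℝ) (i : Fin n) :
    ∑ x, F (update x i 0) + ∑ x, F (update x i 1) = 2 * ∑ x, F x := by
  have hpair : ∀ x : F2 n,
      F (update x i 0) + F (update x i 1) = F x + F (x + Pi.single i 1) := by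
    intro x
    rw [add_single_one_eq_update]
    rcases (by decide : ∀ a : ZMod 2, a = 0 ∨ a = 1) (x i) with hx | hx
    · rw [update_eq_self_iff.mpr hx.symm, hx, zero_add]
    · rw [hx, (by decide : (1 : ZMod 2) + 1 = 0),
        show update x i 1 = x from update_eq_self_iff.mpr hx.symm, add_comm]
  have hshift : ∑ x, F (x + Pi.single i 1) = ∑ x, F x :=
    Fintype.sum_equiv (Equiv.addRight _) _ _ fun _ => rfl
  rw [← sum_add_distrib, sum_congr rfl fun x _ => hpair x, sum_add_distrib, hshift, two_mul]

lemma fCoeff_eq_zero_of_dependsOn {f : F2 n → ℝ} {s : Set (Fin n)} (hf : DependsOn f s)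
    {i : Fin n} (hi : i ∉ s) {γ : F2 n} (hγ : γ i ≠ 0) : fCoeff f γ = 0 := by
  have hflip : ∀ x, f (x + Pi.single i 1) * chi γ (x + Pi.single i 1) = -(f x * chi γ x) := by
    intro x
    have hfx : f (x + Pi.single i 1) = f x :=
      hf fun j hj => by simp [ne_of_mem_of_not_mem hj hi]
    rw [hfx, chi_add_right, chi_single_right_of_ne_zero hγ]
    ring
  have hsum := Equiv.sum_comp (Equiv.addRight (Pi.single i 1)) fun x => f x * chi γ x
  simp only [Equiv.coe_addRight, hflip, sum_neg_distrib] at hsum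
  rw [fCoeff, eq_zero_of_neg_eq hsum, zero_div]

end FourierSums

section Restriction

variable {n : ℕ} {f : F2 n → ℝ} {i : Fin n} {β : F2 n}

noncomputable def coordDeriv (i : Fin n) (f : F2 n → ℝ) (x : F2 n) : ℝ :=
  (f (update x i 0) - f (update x i 1)) / 2

lemma sum_update_mul_chi_add (hβ : β i = 0) :
    ∑ x, f (update x i 0) * chi β x + ∑ x, f (update x i 1) * chi β x =
      2 * ∑ x, f x * chi β x := by
  simpa only [chi_update_of_apply_eq_zero hβ] using
    sum_update_zero_add_sum_update_one (fun x => f x * chi β x) i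

lemma sum_update_mul_chi_sub (hβ : β i = 0) :
    ∑ x, f (update x i 0) * chi β x - ∑ x, f (update x i 1) * chi β x =
      2 * ∑ x, f x * chi (β + Pi.single i 1) x := by
  have hchi : ∀ x c, chi (β + Pi.single i 1) (update x i c) = chi β x * (-1) ^ c.val := by
    intro x c
    rw [chi_add_left, chi_single_left, update_self, chi_update_of_apply_eq_zero hβ]
  have h := sum_update_zero_add_sum_update_one (fun x => f x * chi (β + Pi.single i 1) x) i
  simp only [hchi, ZMod.val_zero, ZMod.val_one, pow_zero, pow_one, mul_one, mul_neg,
    sum_neg_distrib] at h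
  rw [← h, sub_eq_add_neg]

lemma fCoeff_update_zero (hβ : β i = 0) :
    fCoeff (fun x => f (update x i 0)) β = fCoeff f β + fCoeff f (β + Pi.single i 1) := by
  rw [fCoeff, fCoeff, fCoeff, ← add_div]
  congr 1
  linarith [sum_update_mul_chi_add (f := f) hβ, sum_update_mul_chi_sub (f := f) hβ]

lemma fCoeff_coordDeriv (hβ : β i = 0) :
    fCoeff (coordDeriv i f) β = fCoeff f (β + Pi.single i 1) := by
  simp only [fCoeff, coordDeriv, div_mul_eq_mul_div, sub_mul, ← sum_div, sum_sub_distrib]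
  rw [sum_update_mul_chi_sub hβ]
  ring

lemma dependsOn_comp_update {s : Set (Fin n)} (hf : DependsOn f s) (i : Fin n) (c : ZMod 2) :
    DependsOn (fun x => f (update x i c)) (s \ {i}) := by
  intro x y hxy
  refine hf fun j _ => ?_
  rcases eq_or_ne j i with rfl | hj
  · simp
  · simp [update_of_ne hj, hxy j ⟨‹_›, hj⟩]

lemma dependsOn_coordDeriv {s : Set (Fin n)} (hf : DependsOn f s) (i : Fin n) :
    DependsOn (coordDeriv i f) (s \ {i}) := by
  intro x y hxy
  exact congrArg₂ (fun a b => (a - b) / 2) (dependsOn_comp_update hf i 0 hxy)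
    (dependsOn_comp_update hf i 1 hxy)

lemma hammingNorm_add_single (hβ : β i = 0) :
    hammingNorm (β + Pi.single i 1) = hammingNorm β + 1 := by
  have hsupp : univ.filter (fun j => (β + Pi.single i 1 : F2 n) j ≠ 0) =
      insert i (univ.filter fun j => β j ≠ 0) := by
    ext j
    rcases eq_or_ne j i with rfl | hj
    · simp [hβ]
    · simp [hj]
  rw [hammingNorm, hammingNorm, hsupp, card_insert_of_notMem (by simp [hβ])]

lemma hasFourierDegLE_comp_update_zero {d : ℕ} (hf : HasFourierDegLE f d) (i : Fin n) :
    HasFourierDegLE (fun x => f (update x i 0)) d := by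
  intro β hβd
  by_cases hβ : β i = 0
  · rw [fCoeff_update_zero hβ, hf β hβd,
      hf _ (by rw [hammingNorm_add_single hβ]; omega), add_zero]
  · exact fCoeff_eq_zero_of_dependsOn (dependsOn_comp_update (dependsOn_univ f) i 0) (by simp) hβ

lemma hasFourierDegLE_coordDeriv {d : ℕ} (hf : HasFourierDegLE f (d + 1)) (i : Fin n) :
    HasFourierDegLE (coordDeriv i f) d := by
  intro β hβd
  by_cases hβ : β i = 0
  · rw [fCoeff_coordDeriv hβ, hf _ (by rw [hammingNorm_add_single hβ]; omega)]
  · exact fCoeff_eq_zero_of_dependsOn (dependsOn_coordDeriv (dependsOn_univ f) i) (by simp) hβ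

end Restriction

def IsGranular {α : Type*} (G : ℝ) (f : α → ℝ) : Prop :=
  ∀ x, f x ∈ AddSubgroup.zmultiples G

section Granular

variable {n : ℕ} {G : ℝ} {f : F2 n → ℝ}

lemma IsGranular.coordDeriv (hf : IsGranular G f) (i : Fin n) :
    IsGranular (G / 2) (coordDeriv i f) := by
  intro x
  obtain ⟨a, ha⟩ := hf (update x i 0)
  obtain ⟨b, hb⟩ := hf (update x i 1)
  exact ⟨a - b, by rw [_root_.coordDeriv, ← ha, ← hb, ← sub_smul, smul_div_assoc]⟩

lemma fCoeff_mem_zmultiples_of_dependsOn_empty (hf : DependsOn f ∅) (hgran : IsGranular G f)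
    (d : ℕ) (γ : F2 n) : fCoeff f γ ∈ AddSubgroup.zmultiples (G / 2 ^ d) := by
  by_cases hγ : γ = 0
  · have hconst : fCoeff f 0 = f 0 := by
      simp [fCoeff, chi, ip, hf.empty _ 0]
    have hG : G ∈ AddSubgroup.zmultiples (G / 2 ^ d) :=
      AddSubgroup.mem_zmultiples_iff.mpr ⟨2 ^ d, by rw [zsmul_eq_mul]; push_cast; field_simp⟩
    rw [hγ, hconst]
    exact AddSubgroup.zmultiples_le_of_mem hG (hgran 0)
  · obtain ⟨i, hi⟩ := Function.ne_iff.mp hγ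
    rw [fCoeff_eq_zero_of_dependsOn hf (Set.notMem_empty i) hi]
    exact zero_mem _

theorem fCoeff_mem_zmultiples_of_dependsOn (S : Finset (Fin n)) {d : ℕ}
    (hS : DependsOn f S) (hgran : IsGranular G f) (hdeg : HasFourierDegLE f d) (γ : F2 n) :
    fCoeff f γ ∈ AddSubgroup.zmultiples (G / 2 ^ d) := by
  induction S using Finset.induction_on generalizing d G f γ with
  | empty => exact fCoeff_mem_zmultiples_of_dependsOn_empty (by simpa using hS) hgran d γ
  | insert i S _ ih =>
    have hS' : (↑(insert i S) : Set (Fin n)) \ {i} ⊆ S := by simp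
    have hflip : ∀ β : F2 n, β i = 0 →
        fCoeff f (β + Pi.single i 1) ∈ AddSubgroup.zmultiples (G / 2 ^ d) := by
      intro β hβ
      cases d with
      | zero =>
        rw [hdeg _ (by rw [hammingNorm_add_single hβ]; omega)]
        exact zero_mem _
      | succ k =>
        rw [← fCoeff_coordDeriv hβ, pow_succ', ← div_div]
        exact ih ((dependsOn_coordDeriv hS i).mono hS') (hgran.coordDeriv i)
          (hasFourierDegLE_coordDeriv hdeg i) β
    by_cases hγ : γ i = 0
    · rw [eq_sub_of_add_eq (fCoeff_update_zero hγ).symm]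
      exact sub_mem (ih ((dependsOn_comp_update hS i 0).mono hS') (fun x => hgran _)
        (hasFourierDegLE_comp_update_zero hdeg i) γ) (hflip γ hγ)
    · have hγ1 : γ i = 1 := (by decide : ∀ a : ZMod 2, a ≠ 0 → a = 1) _ hγ
      have hγ' : γ = γ + Pi.single i 1 + Pi.single i 1 := by
        ext j
        simp [add_assoc, CharTwo.add_self_eq_zero]
      rw [hγ']
      exact hflip _ (by simp [hγ1]; decide)

end Granular

theorem granular_fourier_coefficients_general (n d : ℕ) (G : ℝ) (f : F2 n → ℝ)
    (hgran : ∀ x, ∃ m : ℤ, f x = (m : ℝ) * G) (hdeg : HasFourierDegLE f d) :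
    ∀ γ : F2 n, ∃ m : ℤ, fCoeff f γ = (m : ℝ) * (G / 2 ^ d) := by
  have hgran' : IsGranular G f := fun x => by
    obtain ⟨m, hm⟩ := hgran x
    exact AddSubgroup.mem_zmultiples_iff.mpr ⟨m, by rw [hm, zsmul_eq_mul]⟩
  intro γ
  have hdep : DependsOn f (univ : Finset (Fin n)) := by simpa using dependsOn_univ f
  obtain ⟨m, hm⟩ := AddSubgroup.mem_zmultiples_iff.mp <|
    fCoeff_mem_zmultiples_of_dependsOn univ hdep hgran' hdeg γ
  exact ⟨m, by rw [← hm, zsmul_eq_mul]⟩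

/-- a G-granular function of Fourier degree at most d has Fourier
coefficients that are integer multiples of 2^{-d}·G. -/
theorem granular_fourier_coefficients (n d : ℕ) (G : ℝ) (hG : 0 < G) (f : F2 n → ℝ)
    (hgran : ∀ x, ∃ m : ℤ, f x = (m : ℝ) * G) (hdeg : HasFourierDegLE f d) :
    ∀ γ : F2 n, ∃ m : ℤ, fCoeff f γ = (m : ℝ) * (G / 2 ^ d) :=
  granular_fourier_coefficients_general n d G f hgran hdeg
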